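/- Let z ∈ ℂ^d with Re zᵢ ≤ 0 for i = 1,…,m (the first m coordinates) and Re zᵢ = 0 for i = m+1,…,d, and let ξ ∈ ℝ^m_{≥0} × ℝ^n with ‖ξ‖ ≤ 1, where d = m+n. Writing z = (z^I, z^J) and ξ = (ξ_I, ξ_J), if ‖z‖ ≤ C then |e^{⟨ξ,z⟩} − 1 − ⟨z^J, ξ_J⟩| ≤ (C + C²)(2‖ξ_I‖ + ‖ξ_J‖²). -/

import Mathlib

/-!
Write `a = ⟨ξ_I, z^I⟩` and `b = ⟨ξ_J, z^J⟩`, so that `Re a ≤ 0` and `Re b ≤ 0`, and split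
`e^{a+b} - 1 - b = e^b (e^a - 1) + (e^b - 1 - b)`. On the half-plane `Re w ≤ 0` we have
`|e^{tw}| ≤ 1` for `t ∈ [0, 1]`, so the mean value inequality along `t ↦ e^{tw}` gives
`|e^w - 1| ≤ |w|` and then `|e^w - 1 - w| ≤ |w|²`. Cauchy–Schwarz bounds `|a| ≤ C‖ξ_I‖` and
`|b| ≤ C‖ξ_J‖`.
-/

open Complex

lemma hasDerivAt_exp_ofReal_mul (w : ℂ) (t : ℝ) :
    HasDerivAt (fun s : ℝ => exp (s * w)) (exp (t * w) * w) t := by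
  simpa using ((hasDerivAt_id t).ofReal_comp.mul_const w).cexp

lemma norm_exp_le_one_of_re_nonpos {w : ℂ} (hw : w.re ≤ 0) : ‖exp w‖ ≤ 1 := by
  rw [norm_exp]
  exact Real.exp_le_one_iff.mpr hw

lemma re_ofReal_mul_nonpos {t : ℝ} (ht : 0 ≤ t) {w : ℂ} (hw : w.re ≤ 0) :
    ((t : ℂ) * w).re ≤ 0 := by
  rw [re_ofReal_mul]
  exact mul_nonpos_of_nonneg_of_nonpos ht hw

lemma norm_exp_sub_one_le_of_re_nonpos {w : ℂ} (hw : w.re ≤ 0) : ‖exp w - 1‖ ≤ ‖w‖ := by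
  simpa using norm_image_sub_le_of_norm_deriv_le_segment_01' (f := fun t : ℝ => exp (t * w))
    (fun t _ => (hasDerivAt_exp_ofReal_mul w t).hasDerivWithinAt) fun t ht => by
      rw [norm_mul]
      exact mul_le_of_le_one_left (norm_nonneg w)
        (norm_exp_le_one_of_re_nonpos (re_ofReal_mul_nonpos ht.1 hw))

lemma norm_exp_sub_one_sub_self_le_of_re_nonpos {w : ℂ} (hw : w.re ≤ 0) :
    ‖exp w - 1 - w‖ ≤ ‖w‖ ^ 2 := by
  have hderiv (t : ℝ) :
      HasDerivAt (fun s : ℝ => exp (s * w) - s * w) (exp (t * w) * w - w) t := by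
    simpa using (hasDerivAt_exp_ofReal_mul w t).fun_sub
      ((hasDerivAt_id t).ofReal_comp.mul_const w)
  have hbound : ∀ t ∈ Set.Ico (0 : ℝ) 1, ‖exp (t * w) * w - w‖ ≤ ‖w‖ ^ 2 := fun t ht =>
    calc ‖exp (t * w) * w - w‖ ≤ ‖(t : ℂ) * w‖ * ‖w‖ := by
          rw [← sub_one_mul, norm_mul]
          gcongr
          exact norm_exp_sub_one_le_of_re_nonpos (re_ofReal_mul_nonpos ht.1 hw)
      _ ≤ ‖w‖ * ‖w‖ := by
          gcongr
          rw [norm_mul, norm_real, Real.norm_of_nonneg ht.1]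
          exact mul_le_of_le_one_left (norm_nonneg w) ht.2.le
      _ = ‖w‖ ^ 2 := (sq _).symm
  have hends : exp w - 1 - w =
      (exp ((1 : ℝ) * w) - (1 : ℝ) * w) - (exp ((0 : ℝ) * w) - (0 : ℝ) * w) := by
    simp only [ofReal_one, one_mul, ofReal_zero, zero_mul, exp_zero, sub_zero]
    ring
  rw [hends]
  exact norm_image_sub_le_of_norm_deriv_le_segment_01'
    (fun t _ => (hderiv t).hasDerivWithinAt) hbound

lemma norm_exp_add_sub_one_sub_le {a b : ℂ} (ha : a.re ≤ 0) (hb : b.re ≤ 0) :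
    ‖exp (a + b) - 1 - b‖ ≤ ‖a‖ + ‖b‖ ^ 2 := by
  have hsplit : exp (a + b) - 1 - b = exp b * (exp a - 1) + (exp b - 1 - b) := by
    rw [exp_add]
    ring
  calc ‖exp (a + b) - 1 - b‖ ≤ ‖exp b‖ * ‖exp a - 1‖ + ‖exp b - 1 - b‖ := by
        rw [hsplit, ← norm_mul]
        exact norm_add_le _ _
    _ ≤ 1 * ‖a‖ + ‖b‖ ^ 2 := by
        gcongr
        · exact norm_exp_le_one_of_re_nonpos hb
        · exact norm_exp_sub_one_le_of_re_nonpos ha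
        · exact norm_exp_sub_one_sub_self_le_of_re_nonpos hb
    _ = ‖a‖ + ‖b‖ ^ 2 := by rw [one_mul]

lemma re_sum_ofReal_mul {ι : Type*} [Fintype ι] (ξ : ι → ℝ) (z : ι → ℂ) :
    (∑ i, (ξ i : ℂ) * z i).re = ∑ i, ξ i * (z i).re := by
  simp only [re_sum, re_ofReal_mul]

lemma norm_sum_ofReal_mul_le {ι : Type*} [Fintype ι] (ξ : EuclideanSpace ℝ ι)
    (z : EuclideanSpace ℂ ι) : ‖∑ i, (ξ i : ℂ) * z i‖ ≤ ‖ξ‖ * ‖z‖ :=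
  calc ‖∑ i, (ξ i : ℂ) * z i‖ ≤ ∑ i, ‖ξ i‖ * ‖z i‖ := by
        simpa only [norm_mul, norm_real] using norm_sum_le Finset.univ fun i => (ξ i : ℂ) * z i
    _ ≤ √(∑ i, ‖ξ i‖ ^ 2) * √(∑ i, ‖z i‖ ^ 2) := Real.sum_mul_le_sqrt_mul_sqrt _ _ _
    _ = ‖ξ‖ * ‖z‖ := by rw [EuclideanSpace.norm_eq, EuclideanSpace.norm_eq]

theorem stmt7_general (m n : ℕ) (C : ℝ)
    (zI : EuclideanSpace ℂ (Fin m)) (zJ : EuclideanSpace ℂ (Fin n))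
    (ξI : EuclideanSpace ℝ (Fin m)) (ξJ : EuclideanSpace ℝ (Fin n))
    (hzI : ∀ i, (zI i).re ≤ 0) (hzJ : ∀ j, (zJ j).re = 0)
    (hξI : ∀ i, 0 ≤ ξI i)
    (hz : Real.sqrt (‖zI‖ ^ 2 + ‖zJ‖ ^ 2) ≤ C) :
    ‖Complex.exp ((∑ i, (ξI i : ℂ) * zI i) + ∑ j, (ξJ j : ℂ) * zJ j) - 1 -
        ∑ j, (ξJ j : ℂ) * zJ j‖ ≤
      (C + C ^ 2) * (2 * ‖ξI‖ + ‖ξJ‖ ^ 2) := by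
  have hC : 0 ≤ C := (Real.sqrt_nonneg _).trans hz
  have hzI_le : ‖zI‖ ≤ C := (Real.le_sqrt_of_sq_le (le_add_of_nonneg_right (sq_nonneg _))).trans hz
  have hzJ_le : ‖zJ‖ ≤ C := (Real.le_sqrt_of_sq_le (le_add_of_nonneg_left (sq_nonneg _))).trans hz
  have ha_re : (∑ i, (ξI i : ℂ) * zI i).re ≤ 0 := by
    rw [re_sum_ofReal_mul]
    exact Finset.sum_nonpos fun i _ => mul_nonpos_of_nonneg_of_nonpos (hξI i) (hzI i)
  have hb_re : (∑ j, (ξJ j : ℂ) * zJ j).re ≤ 0 := by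
    simp [hzJ]
  have ha : ‖∑ i, (ξI i : ℂ) * zI i‖ ≤ ‖ξI‖ * C :=
    (norm_sum_ofReal_mul_le ξI zI).trans (by gcongr)
  have hb : ‖∑ j, (ξJ j : ℂ) * zJ j‖ ≤ ‖ξJ‖ * C :=
    (norm_sum_ofReal_mul_le ξJ zJ).trans (by gcongr)
  calc _ ≤ ‖∑ i, (ξI i : ℂ) * zI i‖ + ‖∑ j, (ξJ j : ℂ) * zJ j‖ ^ 2 :=
        norm_exp_add_sub_one_sub_le ha_re hb_re
    _ ≤ ‖ξI‖ * C + (‖ξJ‖ * C) ^ 2 := by gcongr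
    _ ≤ (C + C ^ 2) * (2 * ‖ξI‖ + ‖ξJ‖ ^ 2) := by
        nlinarith [mul_nonneg (norm_nonneg ξI) hC, mul_nonneg (mul_nonneg (norm_nonneg ξI) hC) hC,
          mul_nonneg (sq_nonneg ‖ξJ‖) hC]

/-- Small-jump estimate: for `z = (zI, zJ)` with `Re zI ≤ 0`, `Re zJ = 0`, `‖z‖ ≤ C` and
`ξ = (ξI, ξJ) ∈ ℝ^m_{≥0} × ℝ^n` with `‖ξ‖ ≤ 1`, one has
`|e^{⟨ξ,z⟩} - 1 - ⟨zJ, ξJ⟩| ≤ (C + C²)(2‖ξI‖ + ‖ξJ‖²)`. -/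
theorem stmt7 (m n : ℕ) (C : ℝ)
    (zI : EuclideanSpace ℂ (Fin m)) (zJ : EuclideanSpace ℂ (Fin n))
    (ξI : EuclideanSpace ℝ (Fin m)) (ξJ : EuclideanSpace ℝ (Fin n))
    (hzI : ∀ i, (zI i).re ≤ 0) (hzJ : ∀ j, (zJ j).re = 0)
    (hξI : ∀ i, 0 ≤ ξI i)
    (hξ : Real.sqrt (‖ξI‖ ^ 2 + ‖ξJ‖ ^ 2) ≤ 1)
    (hz : Real.sqrt (‖zI‖ ^ 2 + ‖zJ‖ ^ 2) ≤ C) :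
    ‖Complex.exp ((∑ i, (ξI i : ℂ) * zI i) + ∑ j, (ξJ j : ℂ) * zJ j) - 1 -
        ∑ j, (ξJ j : ℂ) * zJ j‖ ≤
      (C + C ^ 2) * (2 * ‖ξI‖ + ‖ξJ‖ ^ 2) :=
  stmt7_general m n C zI zJ ξI ξJ hzI hzJ hξI hz
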